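/- arXiv:2010.09256 — 3 statements merged into one kernel-verified Lean document; each statement's English description precedes it below -/
import Mathlib

section
/- Let G = (X, ~) be a connected graph with irreflexive symmetric adjacency where every vertex has at least one neighbor. If S ⊆ X satisfies int(S) = clo(S) ≠ S, then int(S) = Sᶜ (the complement of S). -/
def nbhd {X : Type*} (r : X → X → Prop) (x : X) : Set X := {y | r x y}

def intr {X : Type*} (r : X → X → Prop) (S : Set X) : Set X := {x | nbhd r x ⊆ S}

def clo {X : Type*} (r : X → X → Prop) (S : Set X) : Set X := {x | (nbhd r x ∩ S).Nonempty}

/-- On a connected graph with irreflexive symmetric adjacency where every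
vertex has a neighbor, if `intr S = clo S ≠ S` then `intr S = Sᶜ`. -/
theorem stmt_3 {X : Type*} [Countable X]
    (r : X → X → Prop)
    (hirr : ∀ x, ¬ r x x) (hsym : Symmetric r)
    (hconn : ∀ x y : X, Relation.ReflTransGen r x y)
    (hnbr : ∀ x, ∃ y, r x y)
    (γ : ℕ) (hdeg : ∀ x, (nbhd r x).Finite ∧ (nbhd r x).ncard ≤ γ)
    (S : Set X) (heq : intr r S = clo r S) (hne : intr r S ≠ S) :
    intr r S = Sᶜ := by
  have hic : ∀ x : X, x ∈ intr r S ↔ (nbhd r x ∩ S).Nonempty := by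
    intro x; rw [heq]; exact Iff.rfl
  have stepA : ∀ x y : X, r x y → x ∈ intr r S ∧ x ∈ S → y ∈ intr r S ∧ y ∈ S := by
    rintro x y hxy ⟨hxi, hxS⟩
    exact ⟨(hic y).2 ⟨x, hsym hxy, hxS⟩, hxi hxy⟩
  have stepB : ∀ x y : X, r x y → x ∉ intr r S ∧ x ∉ S → y ∉ intr r S ∧ y ∉ S := by
    rintro x y hxy ⟨hxi, hxS⟩
    have hyS : y ∉ S := fun h => hxi ((hic x).2 ⟨y, hxy, h⟩)
    exact ⟨fun h => hxS (h (hsym hxy)), hyS⟩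
  have propA : ∀ x y : X, (x ∈ intr r S ∧ x ∈ S) → (y ∈ intr r S ∧ y ∈ S) := by
    intro x y hx
    induction hconn x y with
    | refl => exact hx
    | tail _ e ih => exact stepA _ _ e ih
  have propB : ∀ x y : X, (x ∉ intr r S ∧ x ∉ S) → (y ∉ intr r S ∧ y ∉ S) := by
    intro x y hx
    induction hconn x y with
    | refl => exact hx
    | tail _ e ih => exact stepB _ _ e ih
  have noA : ∀ x : X, ¬ (x ∈ intr r S ∧ x ∈ S) := by
    intro x hx
    apply hne
    ext y
    exact ⟨fun _ => (propA x y hx).2, fun _ => (propA x y hx).1⟩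
  have noB : ∀ x : X, ¬ (x ∉ intr r S ∧ x ∉ S) := by
    intro x hx
    apply hne
    ext y
    exact ⟨fun h => absurd h (propB x y hx).1, fun h => absurd h (propB x y hx).2⟩
  ext x
  constructor
  · intro hxi hxS
    exact noA x ⟨hxi, hxS⟩
  · intro hxS
    by_contra hxi
    exact noB x ⟨hxi, hxS⟩
end

section
/- Let G = (X, ~) be a bipartite connected graph with bipartition (X_e, X_o), each vertex having at least one neighbor and bounded degree. If S ⊆ X_o is finite and nonempty, then int(int(S)) is a strict subset of S. -/
/-- On a bipartite connected countably infinite bounded-degree graph with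
bipartition `(Xe, Xo)`, each vertex having a neighbor, every finite nonempty `S ⊆ Xo`
satisfies `intr (intr S) ⊂ S` (strict inclusion). -/
theorem stmt_6 {X : Type*} [Countable X] [Infinite X]
    (r : X → X → Prop)
    (hirr : ∀ x, ¬ r x x) (hsym : Symmetric r)
    (hconn : ∀ x y : X, Relation.ReflTransGen r x y)
    (hnbr : ∀ x, ∃ y, r x y)
    (γ : ℕ) (hdeg : ∀ x, (nbhd r x).Finite ∧ (nbhd r x).ncard ≤ γ)
    (Xe Xo : Set X) (hpart : Xo = Xeᶜ)
    (hbip : ∀ x y, r x y → ((x ∈ Xe ∧ y ∈ Xo) ∨ (x ∈ Xo ∧ y ∈ Xe)))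
    (S : Set X) (hS : S ⊆ Xo) (hfin : S.Finite) (hne : S.Nonempty) :
    intr r (intr r S) ⊂ S := by
  have hsub : intr r (intr r S) ⊆ S := by
    intro x hx
    obtain ⟨y, hy⟩ := hnbr x
    exact (hx hy) (hsym hy)
  refine hsub.ssubset_of_ne ?_
  intro heq
  obtain ⟨s0, hs0⟩ := hne
  have hcover : ∀ x, x ∈ S ∨ x ∈ intr r S := by
    intro x
    induction hconn s0 x with
    | refl => exact Or.inl hs0
    | tail _ hbc ih =>
      rcases ih with h | h
      · rw [← heq] at h
        exact Or.inr (h hbc)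
      · exact Or.inl (h hbc)
  have hfinU : (Set.univ : Set X).Finite := by
    have hss : (Set.univ : Set X) ⊆ S ∪ ⋃ s ∈ S, nbhd r s := by
      intro x _
      rcases hcover x with h | h
      · exact Or.inl h
      · obtain ⟨y, hy⟩ := hnbr x
        exact Or.inr (Set.mem_biUnion (h hy) (hsym hy))
    exact (hfin.union (hfin.biUnion fun s _ => (hdeg s).1)).subset hss
  exact Set.infinite_univ hfinU
end

section
/- Let G = (X, ~) be a bipartite connected infinite graph with bipartition (X_e, X_o) and bounded degree, each vertex having at least one neighbor. If S ⊆ X_o is co-finite in X_o (i.e., X_o \ S is finite) and S ≠ X_o, then S is a strict subset of clo(clo(S)). -/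
/-- On a bipartite connected countably infinite bounded-degree graph with
bipartition `(Xe, Xo)`, each vertex having a neighbor, every `S ⊆ Xo` which is
co-finite in `Xo` and different from `Xo` satisfies `S ⊂ clo (clo S)`. -/
theorem stmt_7 {X : Type*} [Countable X] [Infinite X]
    (r : X → X → Prop)
    (hirr : ∀ x, ¬ r x x) (hsym : Symmetric r)
    (hconn : ∀ x y : X, Relation.ReflTransGen r x y)
    (hnbr : ∀ x, ∃ y, r x y)
    (γ : ℕ) (hdeg : ∀ x, (nbhd r x).Finite ∧ (nbhd r x).ncard ≤ γ)
    (Xe Xo : Set X) (hpart : Xo = Xeᶜ)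
    (hbip : ∀ x y, r x y → ((x ∈ Xe ∧ y ∈ Xo) ∨ (x ∈ Xo ∧ y ∈ Xe)))
    (S : Set X) (hS : S ⊆ Xo) (hcof : (Xo \ S).Finite) (hne : S ≠ Xo) :
    S ⊂ clo r (clo r S) := by
  classical
  -- S ⊆ clo (clo S)
  have hsub : S ⊆ clo r (clo r S) := by
    intro x hx
    obtain ⟨y, hy⟩ := hnbr x
    exact ⟨y, hy, ⟨x, hsym hy, hx⟩⟩
  -- anything in clo S is in Xe
  have hcloXe : ∀ z, z ∈ clo r S → z ∈ Xe := by
    intro z ⟨n, hzn, hnS⟩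
    rcases hbip z n hzn with ⟨h1, _⟩ | ⟨_, h2⟩
    · exact h1
    · exact absurd (hS hnS) (by rw [hpart] at *; exact fun h => h h2)
  -- Xo is infinite
  have hXoInf : Xo.Infinite := by
    intro hfin
    have hXe : Xe ⊆ ⋃ b ∈ Xo, nbhd r b := by
      intro a ha
      obtain ⟨b, hab⟩ := hnbr a
      have hbXo : b ∈ Xo := by
        rcases hbip a b hab with ⟨_, h⟩ | ⟨h, _⟩
        · exact h
        · exact absurd ha (by rw [hpart] at h; exact h)
      exact Set.mem_biUnion hbXo (hsym hab)
    have hXeFin : Xe.Finite :=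
      (hfin.biUnion (fun b _ => (hdeg b).1)).subset hXe
    have : (Set.univ : Set X).Finite := by
      have : (Set.univ : Set X) = Xe ∪ Xo := by
        rw [hpart]; simp
      rw [this]; exact hXeFin.union hfin
    exact Set.infinite_univ this
  -- S nonempty
  have hSne : S.Nonempty := by
    by_contra h
    rw [Set.not_nonempty_iff_eq_empty] at h
    apply hXoInf
    have : Xo = Xo \ S := by rw [h]; simp
    rw [this]; exact hcof
  obtain ⟨s, hs⟩ := hSne
  -- z ∈ Xo \ S
  have hzex : ∃ z, z ∈ Xo ∧ z ∉ S := by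
    by_contra h
    push_neg at h
    exact hne (Set.Subset.antisymm hS h)
  obtain ⟨z, hzXo, hzS⟩ := hzex
  -- key claim by induction along a path from z to s
  have key : ∀ z', Relation.ReflTransGen r z' s →
      z' ∈ S ∨ (z' ∉ S ∧ z' ∈ clo r S) ∨ (∃ w, w ∉ S ∧ w ∈ clo r (clo r S)) := by
    intro z' hpath
    induction hpath using Relation.ReflTransGen.head_induction_on with
    | refl => exact Or.inl hs
    | head hab _ ih =>
      rename_i a c _
      rcases ih with hcS | ⟨hcnS, hcclo⟩ | hw
      · -- c ∈ S, so a ∈ clo S and a ∈ Xe hence a ∉ S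
        have haclo : a ∈ clo r S := ⟨c, hab, hcS⟩
        have haXe : a ∈ Xe := hcloXe a haclo
        have hanS : a ∉ S := fun h => by
          have := hS h; rw [hpart] at this; exact this haXe
        exact Or.inr (Or.inl ⟨hanS, haclo⟩)
      · -- c ∈ clo S \ S, so a ∈ clo (clo S)
        have : a ∈ clo r (clo r S) := ⟨c, hab, hcclo⟩
        by_cases haS : a ∈ S
        · exact Or.inl haS
        · exact Or.inr (Or.inr ⟨a, haS, this⟩)
      · exact Or.inr (Or.inr hw)
  rcases key z (hconn z s) with h | ⟨_, hclo⟩ | ⟨w, hwS, hwclo⟩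
  · exact absurd h hzS
  · -- z ∈ clo S ⇒ z ∈ Xe, contradicting z ∈ Xo
    exact absurd (hcloXe z hclo) (by rw [hpart] at hzXo; exact hzXo)
  · exact ⟨hsub, fun hback => hwS (hback hwclo)⟩
end
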